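/- Let K ⊆ ℝ^d be a compact set, let f : K → ℝ admit a continuous derivative df on K, and let γ : [a,b] → K be a Lipschitz path. Then, with γ' denoting the almost-everywhere existing derivative of γ (which exists by Rademacher's theorem and satisfies γ(β) − γ(α) = ∫_α^β γ'(t) dt), one has ∫_a^b ⟨df(γ(t)), γ'(t)⟩ dt = f(γ(b)) − f(γ(a)). -/

import Mathlib

/-!
The derivative of `f` on `K` is a Fréchet derivative within `K`, so wherever `γ` is
differentiable in `(a, b)` the chain rule gives `(f ∘ γ)' = ⟪df ∘ γ, γ'⟫`. Since `df` is bounded,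
say by `M`, on the compact set `γ '' [a, b]`, the map `f ∘ γ` satisfies `|f (γ z) - f (γ t)| ≤
M C (z - t)` for `z` to the right of and close to each `t`, and a fencing argument makes it
`M C`-Lipschitz on `[a, b]`. Lipschitz functions are absolutely continuous, so the fundamental
theorem of calculus for absolutely continuous functions applies to `f ∘ γ`.
-/

open Set Filter Topology MeasureTheory
open scoped NNReal ENNReal

noncomputable section

/-- `df` is a (not necessarily unique) derivative of `f` on the set `K`:
at every `x ∈ K`, `(f y - f x - ⟪df x, y - x⟫)/‖y - x‖ → 0` as `y → x` within `K`. -/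
def IsDerivOn {d : ℕ} (K : Set (EuclideanSpace ℝ (Fin d)))
    (f : EuclideanSpace ℝ (Fin d) → ℝ)
    (df : EuclideanSpace ℝ (Fin d) → EuclideanSpace ℝ (Fin d)) : Prop :=
  ∀ x ∈ K, Filter.Tendsto
    (fun y => (f y - f x - (inner ℝ (df x) (y - x) : ℝ)) / ‖y - x‖)
    (𝓝[K \ {x}] x) (𝓝 0)

theorem lipschitzOnWith_Icc_of_eventually_norm_sub_le {E : Type*} [NormedAddCommGroup E]
    {g : ℝ → E} {a b : ℝ} {L : ℝ≥0} (hg : ContinuousOn g (Icc a b))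
    (hloc : ∀ x ∈ Ico a b, ∀ᶠ z in 𝓝[>] x, ‖g z - g x‖ ≤ L * (z - x)) :
    LipschitzOnWith L g (Icc a b) := by
  refine LipschitzOnWith.of_dist_le_mul fun u hu v hv => ?_
  wlog huv : u ≤ v generalizing u v
  · rw [dist_comm, dist_comm u]; exact this v hv u hu (le_of_not_ge huv)
  have hsub : Icc u v ⊆ Icc a b := Icc_subset_Icc hu.1 hv.2
  have key := image_le_of_liminf_slope_right_le_deriv_boundary (a := u) (b := v)
    (f := fun t => ‖g t - g u‖) (B := fun t => L * (t - u)) (B' := fun _ => L)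
    ((hg.mono hsub).sub continuousOn_const).norm (by simp) (by fun_prop)
    (fun x _ => ((hasDerivWithinAt_id x _).sub_const u).const_mul (L : ℝ)
      |>.congr_deriv (mul_one _))
    (fun x hx r hr => ?_) (right_mem_Icc.2 huv)
  · rw [dist_comm, dist_eq_norm, Real.dist_eq, abs_of_nonpos (by linarith), neg_sub]
    exact key
  · refine Eventually.frequently ?_
    filter_upwards [hloc x ⟨hu.1.trans hx.1, hx.2.trans_le hv.2⟩, self_mem_nhdsWithin]
      with z hz hxz
    have hzx : 0 < z - x := sub_pos.2 hxz
    rw [slope_def_field, div_lt_iff₀ hzx]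
    calc ‖g z - g u‖ - ‖g x - g u‖ ≤ ‖g z - g x‖ := by
          simpa using norm_sub_norm_le (g z - g u) (g x - g u)
      _ ≤ L * (z - x) := hz
      _ < r * (z - x) := mul_lt_mul_of_pos_right hr hzx

theorem HasFDerivWithinAt.isBigOWith_sub {E F : Type*} [NormedAddCommGroup E] [NormedSpace ℝ E]
    [NormedAddCommGroup F] [NormedSpace ℝ F] {f : E → F} {f' : E →L[ℝ] F} {s : Set E} {x : E}
    (hf : HasFDerivWithinAt f f' s x) {r : ℝ} (hr : ‖f'‖ < r) :
    Asymptotics.IsBigOWith r (𝓝[s] x) (fun y => f y - f x) (fun y => y - x) := by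
  simpa using hf.isLittleO.add_isBigOWith (f'.isBigOWith_comp _ _) hr

theorem LipschitzOnWith.comp_Icc_of_hasFDerivWithinAt {E F : Type*} [NormedAddCommGroup E]
    [NormedSpace ℝ E] [NormedAddCommGroup F] [NormedSpace ℝ F] {f : E → F} {f' : E → E →L[ℝ] F}
    {K : Set E} {γ : ℝ → E} {a b : ℝ} {C M : ℝ≥0}
    (hf : ∀ x ∈ K, HasFDerivWithinAt f (f' x) K x) (hf' : ∀ t ∈ Icc a b, ‖f' (γ t)‖ < M)
    (hγ : LipschitzOnWith C γ (Icc a b)) (hγK : MapsTo γ (Icc a b) K) :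
    LipschitzOnWith (M * C) (f ∘ γ) (Icc a b) := by
  have hfK : ContinuousOn f K := fun x hx => (hf x hx).continuousWithinAt
  refine lipschitzOnWith_Icc_of_eventually_norm_sub_le (hfK.comp hγ.continuousOn hγK)
    fun x hx => ?_
  have hxab : x ∈ Icc a b := Ico_subset_Icc_self hx
  have hfx := ((hf _ (hγK hxab)).isBigOWith_sub (hf' x hxab)).bound
  have hγx : Tendsto γ (𝓝[>] x) (𝓝[K] (γ x)) :=
    ((hγ.continuousOn x hxab).tendsto_nhdsWithin hγK).mono_left
      (nhdsWithin_le_of_mem (Icc_mem_nhdsGT_of_mem hx))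
  filter_upwards [hγx.eventually hfx, self_mem_nhdsWithin,
    nhdsWithin_le_of_mem (Icc_mem_nhdsGT_of_mem hx) self_mem_nhdsWithin]
    with z hz (hxz : x < z) hzab
  calc ‖f (γ z) - f (γ x)‖ ≤ M * ‖γ z - γ x‖ := hz
    _ ≤ M * (C * (z - x)) := by
        gcongr
        simpa [dist_eq_norm, Real.dist_eq, abs_of_pos (sub_pos.2 hxz)] using
          hγ.dist_le_mul z hzab x hxab
    _ = ↑(M * C) * (z - x) := by push_cast; ring

theorem IsDerivOn.hasFDerivWithinAt {d : ℕ} {K : Set (EuclideanSpace ℝ (Fin d))}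
    {f : EuclideanSpace ℝ (Fin d) → ℝ} {df : EuclideanSpace ℝ (Fin d) → EuclideanSpace ℝ (Fin d)}
    (h : IsDerivOn K f df) {x : EuclideanSpace ℝ (Fin d)} (hx : x ∈ K) :
    HasFDerivWithinAt f (innerSL ℝ (df x)) K x := by
  rw [← hasFDerivWithinAt_sdiff_singleton_self, hasFDerivWithinAt_iff_tendsto]
  simpa [norm_div, div_eq_inv_mul] using (h x hx).norm

theorem ftc_lipschitz_path {d : ℕ} (K : Set (EuclideanSpace ℝ (Fin d)))
    (f : EuclideanSpace ℝ (Fin d) → ℝ)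
    (df : EuclideanSpace ℝ (Fin d) → EuclideanSpace ℝ (Fin d))
    (hdf : IsDerivOn K f df) (hdfc : ContinuousOn df K)
    (a b : ℝ) (hab : a ≤ b)
    (γ : ℝ → EuclideanSpace ℝ (Fin d)) (C : ℝ≥0)
    (hγlip : LipschitzOnWith C γ (Icc a b)) (hγK : MapsTo γ (Icc a b) K)
    (γ' : ℝ → EuclideanSpace ℝ (Fin d))
    (hγ' : ∀ᵐ t ∂(volume.restrict (Icc a b)), HasDerivWithinAt γ (γ' t) (Icc a b) t) :
    ∫ t in a..b, (inner ℝ (df (γ t)) (γ' t) : ℝ) = f (γ b) - f (γ a) := by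
  have hf : ∀ x ∈ K, HasFDerivWithinAt f (innerSL ℝ (df x)) K x :=
    fun x hx => hdf.hasFDerivWithinAt hx
  obtain ⟨M, hM⟩ : ∃ M : ℝ≥0, ∀ t ∈ Icc a b, ‖innerSL ℝ (df (γ t))‖ < M := by
    obtain ⟨M, hM⟩ :=
      isCompact_Icc.exists_bound_of_continuousOn (hdfc.comp hγlip.continuousOn hγK)
    refine ⟨M.toNNReal + 1, fun t ht => ?_⟩
    rw [innerSL_apply_norm, NNReal.coe_add, Real.coe_toNNReal', NNReal.coe_one]
    exact (hM t ht).trans_lt (lt_add_one _ |>.trans_le' (le_max_left _ _))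
  have hfγ : AbsolutelyContinuousOnInterval (f ∘ γ) a b := by
    have hlip := LipschitzOnWith.comp_Icc_of_hasFDerivWithinAt hf hM hγlip hγK
    rw [← uIcc_of_le hab] at hlip
    exact hlip.absolutelyContinuousOnInterval
  have hderiv : ∀ᵐ t, t ∈ uIoc a b → deriv (f ∘ γ) t = inner ℝ (df (γ t)) (γ' t) := by
    rw [uIoc_of_le hab]
    filter_upwards [(ae_restrict_iff' measurableSet_Icc).1 hγ', Ioo_ae_eq_Ioc (a := a) (b := b)]
      with t hγt hIoo htIoc
    have htIoo : t ∈ Ioo a b := (Eq.to_iff hIoo).2 htIoc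
    have htIcc : t ∈ Icc a b := Ioo_subset_Icc_self htIoo
    exact (((hf _ (hγK htIcc)).comp_hasDerivWithinAt t (hγt htIcc) hγK).hasDerivAt
      (Icc_mem_nhds htIoo.1 htIoo.2)).deriv
  rw [← intervalIntegral.integral_congr_ae hderiv, hfγ.integral_deriv_eq_sub]
  rfl
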